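/- arXiv:1307.5377 — 4 statements merged into one kernel-verified Lean document; each statement's English description precedes it below -/
import Mathlib

section
/- Let (A,λ,L) and (A',λ',L) be Pom_L-bisimilar labelled asynchronous systems. Then for every event a₁ ∈ E such that s₀·a₁ is defined, there exists an event a₁' ∈ E' such that s₀'·a₁' is defined and the labelled asynchronous systems (A(s₀·a₁),λ,L) and (A'(s₀'·a₁'),λ',L) are Pom_L-bisimilar. -/
/-- An asynchronous (transition) system: a state space with an initial state,
in which every event occurs in at least one transition. -/
structure AsyncSystem (S E : Type) where
  init : S
  indep : E → E → Prop
  tran : S → E → S → Prop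
  indep_symm : ∀ a b, indep a b → indep b a
  indep_irrefl : ∀ a, ¬ indep a a
  det : ∀ s a s' s'', tran s a s' → tran s a s'' → s' = s''
  diamond : ∀ a b s s' s'', indep a b → tran s a s' → tran s' b s'' →
    ∃ s₁, tran s b s₁ ∧ tran s₁ a s''
  event_occurs : ∀ e, ∃ s₁ s₂, tran s₁ e s₂

/-- A state is reachable if there is a finite sequence of transitions from the
initial state to it. -/
def AsyncSystem.Reachable {S E : Type} (A : AsyncSystem S E) (s : S) : Prop :=
  Relation.ReflTransGen (fun x y => ∃ e, A.tran x e y) A.init s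

/-- `A.rebase s` is the asynchronous system `A(s)`: `A` with initial state replaced by `s`. -/
def AsyncSystem.rebase {S E : Type} (A : AsyncSystem S E) (s : S) : AsyncSystem S E :=
  { A with init := s }

/-- `A.Exec s w t` means `s · w = t`: the word `w` can be executed from `s`, ending in `t`. -/
def AsyncSystem.Exec {S E : Type} (A : AsyncSystem S E) : S → List E → S → Prop
  | s, [], t => s = t
  | s, e :: w, t => ∃ u, A.tran s e u ∧ A.Exec u w t

/-- A morphism of asynchronous systems with a total event map `η`. -/
def IsMorphism {S E S' E' : Type} (A : AsyncSystem S E) (A' : AsyncSystem S' E')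
    (σ : S → S') (η : E → E') : Prop :=
  σ A.init = A'.init ∧
  (∀ s₁ e s₂, A.tran s₁ e s₂ → A'.tran (σ s₁) (η e) (σ s₂)) ∧
  (∀ e₁ e₂, A.indep e₁ e₂ → A'.indep (η e₁) (η e₂))

/-- An open morphism of asynchronous systems (its event map is total). -/
def IsOpenMorphism {S E S' E' : Type} (A : AsyncSystem S E) (A' : AsyncSystem S' E')
    (σ : S → S') (η : E → E') : Prop :=
  IsMorphism A A' σ η ∧
  (∀ s e' u', A'.tran (σ s) e' u' → ∃ e u, A.tran s e u ∧ η e = e' ∧ σ u = u') ∧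
  (∀ s, A.Reachable s → ∀ e₁ e₂ u v, A.tran s e₁ u → A.tran u e₂ v →
    A'.indep (η e₁) (η e₂) → A.indep e₁ e₂)

/-- A `Pom_L`-open morphism of labelled asynchronous systems: an open morphism
preserving labels. -/
def IsPomOpen {S E S' E' L : Type} (A : AsyncSystem S E) (lab : E → L)
    (A' : AsyncSystem S' E') (lab' : E' → L) (σ : S → S') (η : E → E') : Prop :=
  IsOpenMorphism A A' σ η ∧ ∀ e, lab' (η e) = lab e

/-- Two labelled asynchronous systems are `Pom_L`-bisimilar if there is a third labelled
asynchronous system with `Pom_L`-open morphisms to each of them. -/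
def Bisimilar {S E S' E' L : Type} (A : AsyncSystem S E) (lab : E → L)
    (A' : AsyncSystem S' E') (lab' : E' → L) : Prop :=
  ∃ (S'' E'' : Type) (A'' : AsyncSystem S'' E'') (lab'' : E'' → L)
    (σ : S'' → S) (η : E'' → E) (σ' : S'' → S') (η' : E'' → E'),
    IsPomOpen A'' lab'' A lab σ η ∧ IsPomOpen A'' lab'' A' lab' σ' η'

/-- `Qn A n`: pairs of a reachable state `s` and an `n`-tuple of pairwise independent
events executable from `s`.  For `n = 0` this is the set of reachable states. -/
def Qn {S E : Type} (A : AsyncSystem S E) (n : ℕ) : Set (S × (Fin n → E)) :=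
  {p | A.Reachable p.1 ∧ (∃ t, A.Exec p.1 (List.ofFn p.2) t) ∧
    ∀ i j : Fin n, i < j → A.indep (p.2 i) (p.2 j)}

/-- The vertex set `λ⁺E` of the simplicial scheme of a labelled asynchronous system. -/
def VertexSet {S E L : Type} (A : AsyncSystem S E) (lab : E → L) : Set L :=
  {l | ∃ (a : E) (s u : S), A.Reachable s ∧ A.tran s a u ∧ lab a = l}

/-- The simplices of the simplicial scheme of a labelled asynchronous system:
finite nonempty sets `{λ(a₁), …, λ(a_k)}` (`k ≥ 1`) where the `aᵢ` are pairwise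
independent and `s · a₁ ⋯ a_k` is defined for some reachable state `s`. -/
def Simplices {S E L : Type} (A : AsyncSystem S E) (lab : E → L) : Set (Set L) :=
  {X | ∃ (k : ℕ) (a : Fin (k + 1) → E) (s : S),
    A.Reachable s ∧
    (∀ i j, i < j → A.indep (a i) (a j)) ∧
    (∃ t, A.Exec s (List.ofFn a) t) ∧
    X = Set.range fun i => lab (a i)}

/-!
Take a common cover `A''` with `Pom_L`-open morphisms `(σ, η)` to `A` and `(σ', η')` to `A'`.
By openness of `σ`, the transition `s₀ · a₁ = s₁` lifts to a transition `s₀'' · e = u` of `A''`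
with `σ u = s₁`; its image under `σ'` is a transition `s₀' · η' e = σ' u` of `A'`. Since `u` is
reachable, both morphisms stay `Pom_L`-open after moving the initial states to `u`, `s₁` and
`σ' u`, so `A''(u)` is a common cover of `A(s₁)` and `A'(σ' u)`.
-/

namespace AsyncSystem

variable {S E : Type}

theorem Reachable.trans_rebase {A : AsyncSystem S E} {s t : S} (hs : A.Reachable s)
    (ht : (A.rebase s).Reachable t) : A.Reachable t :=
  Relation.ReflTransGen.trans hs ht

theorem reachable_of_tran_init {A : AsyncSystem S E} {e : E} {u : S} (h : A.tran A.init e u) :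
    A.Reachable u :=
  Relation.ReflTransGen.single ⟨e, h⟩

end AsyncSystem

section Rebase

variable {S E S' E' L : Type} {A : AsyncSystem S E} {A' : AsyncSystem S' E'}
  {σ : S → S'} {η : E → E'}

theorem IsMorphism.tran_init (h : IsMorphism A A' σ η) {e : E} {u : S}
    (he : A.tran A.init e u) : A'.tran A'.init (η e) (σ u) :=
  h.1 ▸ h.2.1 _ _ _ he

theorem IsOpenMorphism.exists_lift_tran_init (h : IsOpenMorphism A A' σ η) {e' : E'} {u' : S'}
    (he' : A'.tran A'.init e' u') : ∃ e u, A.tran A.init e u ∧ η e = e' ∧ σ u = u' :=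
  h.2.1 A.init e' u' (h.1.1 ▸ he')

theorem IsOpenMorphism.rebase (h : IsOpenMorphism A A' σ η) {s : S} (hs : A.Reachable s) :
    IsOpenMorphism (A.rebase s) (A'.rebase (σ s)) σ η := by
  obtain ⟨⟨-, htran, hindep⟩, hlift, hreflect⟩ := h
  exact ⟨⟨rfl, htran, hindep⟩, hlift, fun t ht => hreflect t (hs.trans_rebase ht)⟩

theorem IsPomOpen.rebase {lab : E → L} {lab' : E' → L} (h : IsPomOpen A lab A' lab' σ η)
    {s : S} (hs : A.Reachable s) : IsPomOpen (A.rebase s) lab (A'.rebase (σ s)) lab' σ η :=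
  ⟨h.1.rebase hs, h.2⟩

end Rebase

/-- if `(A, λ, L)` and `(A', λ', L)` are `Pom_L`-bisimilar, then for every
event `a₁` with `s₀ · a₁` defined there is an event `a₁'` with `s₀' · a₁'` defined such
that `(A(s₀ · a₁), λ, L)` and `(A'(s₀' · a₁'), λ', L)` are `Pom_L`-bisimilar. -/
theorem bisimilar_step {S E S' E' L : Type}
    (A : AsyncSystem S E) (lab : E → L) (A' : AsyncSystem S' E') (lab' : E' → L)
    (h : Bisimilar A lab A' lab')
    (a₁ : E) (s₁ : S) (ha : A.tran A.init a₁ s₁) :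
    ∃ (a₁' : E') (s₁' : S'), A'.tran A'.init a₁' s₁' ∧
      Bisimilar (A.rebase s₁) lab (A'.rebase s₁') lab' := by
  obtain ⟨S'', E'', A'', lab'', σ, η, σ', η', hσ, hσ'⟩ := h
  obtain ⟨e, u, he, -, rfl⟩ := hσ.1.exists_lift_tran_init ha
  have hu : A''.Reachable u := AsyncSystem.reachable_of_tran_init he
  exact ⟨η' e, σ' u, hσ'.1.1.tran_init he,
    S'', E'', A''.rebase u, lab'', σ, η, σ', η', hσ.rebase hu, hσ'.rebase hu⟩
end

section
/- If (σ,η): A → A' is an open morphism of asynchronous systems, then for every n ≥ 0 the induced map Q_n(σ,η): Q_n(A) → Q_n(A'), given by (s,e₁,…,e_n) ↦ (σ(s),η(e₁),…,η(e_n)), is surjective. -/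
/-!
An open morphism lifts reachable states and executable words along `σ`. A lifted word of
pairwise `A'`-independent events is pairwise `A`-independent: in a pairwise independent
executable word every letter is already enabled at the start (by the diamond property), so
for an earlier letter `a` and a later letter `b` the path `s --a--> u --b--> v` exists, and
openness reflects the independence of `η a` and `η b` to that of `a` and `b`.
-/

namespace AsyncSystem

variable {S E : Type} {A : AsyncSystem S E}

theorem Exec.exists_tran_of_mem {w : List E} {u v : S} (hexec : A.Exec u w v)
    (hw : w.Pairwise A.indep) {b : E} (hb : b ∈ w) : ∃ u', A.tran u b u' := by
  induction w generalizing u with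
  | nil => cases hb
  | cons a w ih =>
    obtain ⟨m, hm, hrest⟩ := hexec
    rcases List.mem_cons.1 hb with rfl | hb
    · exact ⟨m, hm⟩
    obtain ⟨m', hm'⟩ := ih hrest hw.of_cons hb
    obtain ⟨u', hu', -⟩ := A.diamond a b u m m' (List.rel_of_pairwise_cons hw hb) hm hm'
    exact ⟨u', hu'⟩

end AsyncSystem

namespace IsOpenMorphism

variable {S E S' E' : Type} {A : AsyncSystem S E} {A' : AsyncSystem S' E'}
  {σ : S → S'} {η : E → E'}

theorem exists_reachable_preimage (hopen : IsOpenMorphism A A' σ η) {s' : S'}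
    (hs' : A'.Reachable s') : ∃ s, A.Reachable s ∧ σ s = s' := by
  induction hs' with
  | refl => exact ⟨A.init, Relation.ReflTransGen.refl, hopen.1.1⟩
  | tail _ hstep ih =>
    obtain ⟨s, hs, rfl⟩ := ih
    obtain ⟨e', he'⟩ := hstep
    obtain ⟨e, u, hu, -, rfl⟩ := hopen.2.1 s e' _ he'
    exact ⟨u, hs.tail ⟨e, hu⟩, rfl⟩

theorem exists_exec_lift (hopen : IsOpenMorphism A A' σ η) {n : ℕ} {e' : Fin n → E'}
    {s : S} {t' : S'} (hexec : A'.Exec (σ s) (List.ofFn e') t') :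
    ∃ (e : Fin n → E) (t : S), A.Exec s (List.ofFn e) t ∧ η ∘ e = e' := by
  induction n generalizing s with
  | zero => exact ⟨Fin.elim0, s, rfl, funext fun i => i.elim0⟩
  | succ n ih =>
    rw [List.ofFn_succ] at hexec
    obtain ⟨u', hu', hrest⟩ := hexec
    obtain ⟨a, u, hu, ha, rfl⟩ := hopen.2.1 s (e' 0) u' hu'
    obtain ⟨e, t, htail, he⟩ := ih (e' := Fin.tail e') hrest
    refine ⟨Fin.cons a e, t, ?_, ?_⟩
    · rw [List.ofFn_succ]
      exact ⟨u, hu, htail⟩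
    · ext i
      cases i using Fin.cases with
      | zero => exact ha
      | succ i => exact congrFun he i

theorem pairwise_indep_of_exec (hopen : IsOpenMorphism A A' σ η) {w : List E} {s t : S}
    (hs : A.Reachable s) (hexec : A.Exec s w t)
    (hw : w.Pairwise fun a b => A'.indep (η a) (η b)) : w.Pairwise A.indep := by
  induction w generalizing s with
  | nil => exact List.Pairwise.nil
  | cons a w ih =>
    obtain ⟨u, hu, hrest⟩ := hexec
    have hindep : w.Pairwise A.indep := ih (hs.tail ⟨a, hu⟩) hrest hw.of_cons
    refine List.pairwise_cons.2 ⟨fun b hb => ?_, hindep⟩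
    obtain ⟨v, hv⟩ := hrest.exists_tran_of_mem hindep hb
    exact hopen.2.2 s hs a b u v hu hv (List.rel_of_pairwise_cons hw hb)

end IsOpenMorphism

/-- for an open morphism `(σ, η) : A → A'`, the induced map
`Q_n(σ, η) : Q_n(A) → Q_n(A')`, `(s, e₁, …, e_n) ↦ (σ s, η e₁, …, η e_n)`,
is surjective for every `n ≥ 0`. -/
theorem Qn_surjective {S E S' E' : Type}
    (A : AsyncSystem S E) (A' : AsyncSystem S' E') (σ : S → S') (η : E → E')
    (hopen : IsOpenMorphism A A' σ η) (n : ℕ) :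
    Set.SurjOn (fun p : S × (Fin n → E) => (σ p.1, fun i => η (p.2 i)))
      (Qn A n) (Qn A' n) := by
  rintro ⟨s', e'⟩ ⟨hs', ⟨t', hexec'⟩, hindep'⟩
  obtain ⟨s, hs, rfl⟩ := hopen.exists_reachable_preimage hs'
  obtain ⟨e, t, hexec, rfl⟩ := hopen.exists_exec_lift hexec'
  have hindep := hopen.pairwise_indep_of_exec hs hexec (List.pairwise_ofFn.2 hindep')
  exact ⟨(s, e), ⟨hs, ⟨t, hexec⟩, fun i j hij => List.pairwise_ofFn.1 hindep hij⟩, rfl⟩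
end

section
/- The converse of the surjectivity property fails: there exist asynchronous systems A and A' and a morphism (σ,η): A → A' with η total such that Q_n(σ,η) is surjective for every n ≥ 0, but (σ,η) is not open. Concretely, take A with S = {s₀}, E = {a,b,c}, I = {(a,b),(b,a)}, Tran = {(s₀,e,s₀) : e ∈ E}, and A' with S' = {s₀'}, E' = {a',b'}, I' = {(a',b'),(b',a')}, Tran' = {(s₀',e',s₀') : e' ∈ E'}, with σ(s₀) = s₀', η(a) = η(c) = a', η(b) = b'; then (η(b),η(c)) ∈ I' but (b,c) ∉ I, so (σ,η) is not open, yet all Q_n(σ,η) are surjective. -/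
/-!
In a system with one state and a loop for every event, `Q_n` is just the set of pairwise
independent `n`-tuples of events. So between two such systems, `Q_n(σ, η)` is onto as soon as
`η` has a section reflecting independence, whereas openness fails as soon as some dependent
pair of events is sent to an independent one. The example has both: `a' ↦ a`, `b' ↦ b` is such
a section, and `b, c` is such a pair.
-/

namespace AsyncSystem

def bouquet {E : Type} (I : E → E → Prop) (symm : ∀ a b, I a b → I b a)
    (irrefl : ∀ a, ¬ I a a) : AsyncSystem Unit E where
  init := ()
  indep := I
  tran _ _ _ := True
  indep_symm := symm
  indep_irrefl := irrefl
  det _ _ _ _ _ _ := rfl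
  diamond _ _ _ _ _ _ _ _ := ⟨(), trivial, trivial⟩
  event_occurs _ := ⟨(), (), trivial⟩

section Bouquet

variable {E E' : Type} {I : E → E → Prop} {symm : ∀ a b, I a b → I b a} {irrefl : ∀ a, ¬ I a a}
  {I' : E' → E' → Prop} {symm' : ∀ a b, I' a b → I' b a} {irrefl' : ∀ a, ¬ I' a a}

theorem bouquet_exec (w : List E) : (bouquet I symm irrefl).Exec () w () := by
  induction w with
  | nil => rfl
  | cons e w ih => exact ⟨(), trivial, ih⟩

theorem mem_Qn_bouquet {n : ℕ} {p : Unit × (Fin n → E)} :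
    p ∈ Qn (bouquet I symm irrefl) n ↔ ∀ i j : Fin n, i < j → I (p.2 i) (p.2 j) :=
  ⟨fun hp => hp.2.2, fun h => ⟨.refl, ⟨(), bouquet_exec _⟩, h⟩⟩

theorem isMorphism_bouquet (η : E → E') (hη : ∀ a b, I a b → I' (η a) (η b)) :
    IsMorphism (bouquet I symm irrefl) (bouquet I' symm' irrefl') (fun _ => ()) η :=
  ⟨rfl, fun _ _ _ _ => trivial, hη⟩

theorem surjOn_Qn_bouquet (η : E → E') (κ : E' → E) (hκ : Function.LeftInverse η κ)
    (hκI : ∀ a b, I' a b → I (κ a) (κ b)) (n : ℕ) :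
    Set.SurjOn (fun p : Unit × (Fin n → E) => ((), fun i => η (p.2 i)))
      (Qn (bouquet I symm irrefl) n) (Qn (bouquet I' symm' irrefl') n) := by
  intro p hp
  refine ⟨((), fun i => κ (p.2 i)), mem_Qn_bouquet.2 fun i j hij => ?_, ?_⟩
  · exact hκI _ _ (mem_Qn_bouquet.1 hp i j hij)
  · exact Prod.ext rfl (funext fun i => hκ (p.2 i))

theorem not_isOpenMorphism_bouquet (η : E → E') {a b : E} (hη : I' (η a) (η b))
    (hab : ¬ I a b) :
    ¬ IsOpenMorphism (bouquet I symm irrefl) (bouquet I' symm' irrefl') (fun _ => ()) η :=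
  fun h => hab (h.2.2 () .refl a b () () trivial trivial hη)

end Bouquet

end AsyncSystem

open AsyncSystem

/-- The events `a, b, c` are encoded as `0, 1, 2`, and `a', b'` as `0, 1`. -/
def abIndep (x y : Fin 3) : Prop := x = 0 ∧ y = 1 ∨ x = 1 ∧ y = 0

/-- the converse of the surjectivity property fails: there are asynchronous
systems `A`, `A'` and a morphism `(σ, η)` with total event map such that all induced maps
`Q_n(σ, η)` are surjective, but `(σ, η)` is not open. -/
theorem surjective_not_open :
    ∃ (S E S' E' : Type) (A : AsyncSystem S E) (A' : AsyncSystem S' E')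
      (σ : S → S') (η : E → E'),
      IsMorphism A A' σ η ∧
      (∀ n : ℕ, Set.SurjOn (fun p : S × (Fin n → E) => (σ p.1, fun i => η (p.2 i)))
        (Qn A n) (Qn A' n)) ∧
      ¬ IsOpenMorphism A A' σ η := by
  let A := bouquet abIndep (by unfold abIndep; decide) (by unfold abIndep; decide)
  let A' := bouquet (fun x y : Fin 2 => x ≠ y) (fun _ _ h => h.symm) (fun _ h => h rfl)
  let η : Fin 3 → Fin 2 := ![0, 1, 0]
  let κ : Fin 2 → Fin 3 := ![0, 1]
  refine ⟨Unit, Fin 3, Unit, Fin 2, A, A', fun _ => (), η, ?_, ?_, ?_⟩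
  · exact isMorphism_bouquet η (by unfold abIndep; decide)
  · exact surjOn_Qn_bouquet η κ (by decide) (by unfold abIndep; decide)
  · exact not_isOpenMorphism_bouquet η (a := 1) (b := 2) (by decide) (by unfold abIndep; decide)
end

section
/- If the labelled asynchronous systems (A,λ,L) and (A',λ',L) are Pom_L-bisimilar, then their associated simplicial schemes are equal: the vertex sets λ⁺E and λ'⁺E' coincide, and a finite nonempty subset of L is a simplex of the scheme of (A,λ,L) if and only if it is a simplex of the scheme of (A',λ',L). (Consequently, the homology groups of the two labelled asynchronous systems are isomorphic in every degree.) -/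
/-! Morphisms push reachable states, executions and independence forward, so the scheme of
the source of a `Pom_L`-open morphism is contained in that of its target. Conversely, openness
lifts reachable states and executions back along the morphism, and the third openness condition,
carried along an execution by the diamond property, reflects pairwise independence of a lifted
word. As labels are preserved, an open morphism leaves the scheme unchanged; a bisimulation is a
span of two such morphisms. -/

variable {S E S' E' L : Type}

theorem AsyncSystem.Reachable.step {A : AsyncSystem S E} {s t : S} {e : E}
    (hs : A.Reachable s) (h : A.tran s e t) : A.Reachable t :=
  Relation.ReflTransGen.tail hs ⟨e, h⟩

theorem List.exists_ofFn_succ_eq {α : Type*} {w : List α} (hw : w ≠ []) :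
    ∃ (k : ℕ) (a : Fin (k + 1) → α), List.ofFn a = w :=
  match w, hw with
  | x :: v, _ => ⟨v.length, fun i => (x :: v)[(i : ℕ)], List.ofFn_getElem (xs := x :: v)⟩

theorem mem_simplices_iff {A : AsyncSystem S E} {lab : E → L} {X : Set L} :
    X ∈ Simplices A lab ↔ ∃ (w : List E) (s : S), w ≠ [] ∧ A.Reachable s ∧
      w.Pairwise A.indep ∧ (∃ t, A.Exec s w t) ∧ X = lab '' {a | a ∈ w} := by
  have image_ofFn {k : ℕ} (a : Fin k → E) :
      lab '' {x | x ∈ List.ofFn a} = Set.range fun i => lab (a i) := by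
    ext l
    simp [List.mem_ofFn]
  constructor
  · rintro ⟨k, a, s, hs, hind, hexec, rfl⟩
    exact ⟨List.ofFn a, s, by simp, hs, List.pairwise_ofFn.2 hind, hexec, (image_ofFn a).symm⟩
  · rintro ⟨w, s, hne, hs, hind, hexec, rfl⟩
    obtain ⟨k, a, rfl⟩ := List.exists_ofFn_succ_eq hne
    exact ⟨k, a, s, hs, fun _ _ hij => List.pairwise_ofFn.1 hind hij, hexec, image_ofFn a⟩

section Morphism

variable {A : AsyncSystem S E} {A' : AsyncSystem S' E'} {σ : S → S'} {η : E → E'}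

theorem IsMorphism.reachable (hm : IsMorphism A A' σ η) {s : S} (hs : A.Reachable s) :
    A'.Reachable (σ s) := by
  induction hs with
  | refl => rw [hm.1]; exact Relation.ReflTransGen.refl
  | tail _ h ih =>
    obtain ⟨e, he⟩ := h
    exact ih.step (hm.2.1 _ _ _ he)

theorem IsMorphism.exec (hm : IsMorphism A A' σ η) {w : List E} {s t : S}
    (h : A.Exec s w t) : A'.Exec (σ s) (w.map η) (σ t) := by
  induction w generalizing s with
  | nil => cases h; rfl
  | cons e w ih =>
    obtain ⟨u, hu, hw⟩ := h
    exact ⟨σ u, hm.2.1 _ _ _ hu, ih hw⟩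

theorem IsOpenMorphism.exists_reachable_preimage_s8 (ho : IsOpenMorphism A A' σ η) {s' : S'}
    (hs' : A'.Reachable s') : ∃ s, A.Reachable s ∧ σ s = s' := by
  induction hs' with
  | refl => exact ⟨A.init, Relation.ReflTransGen.refl, ho.1.1⟩
  | tail _ h ih =>
    obtain ⟨s, hs, rfl⟩ := ih
    obtain ⟨e', he'⟩ := h
    obtain ⟨e, u, hu, -, rfl⟩ := ho.2.1 s e' _ he'
    exact ⟨u, hs.step hu, rfl⟩

theorem IsOpenMorphism.exists_exec_lift_s8 (ho : IsOpenMorphism A A' σ η) {w' : List E'} {s : S}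
    {t' : S'} (h : A'.Exec (σ s) w' t') : ∃ w t, A.Exec s w t ∧ w.map η = w' ∧ σ t = t' := by
  induction w' generalizing s with
  | nil => exact ⟨[], s, rfl, rfl, h⟩
  | cons e' w' ih =>
    obtain ⟨u', hu', hw'⟩ := h
    obtain ⟨e, u, hu, rfl, rfl⟩ := ho.2.1 s e' u' hu'
    obtain ⟨w, t, hw, rfl, hσt⟩ := ih hw'
    exact ⟨e :: w, t, ⟨u, hu, hw⟩, rfl, hσt⟩

/-- The diamond property moves `a` past each event of `w` in turn, so that the openness
condition on consecutive events applies to `a` and every event of `w`. -/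
theorem IsOpenMorphism.indep_of_exec_cons (ho : IsOpenMorphism A A' σ η) {a : E} {w : List E}
    {s t : S} (hs : A.Reachable s) (h : A.Exec s (a :: w) t)
    (hind : ∀ b ∈ w, A'.indep (η a) (η b)) : ∀ b ∈ w, A.indep a b := by
  induction w generalizing s with
  | nil => simp
  | cons c w ih =>
    obtain ⟨u, hu, v, hv, hw⟩ := h
    have hac : A.indep a c := ho.2.2 s hs a c u v hu hv (hind c List.mem_cons_self)
    obtain ⟨s₁, hs₁, ha₁⟩ := A.diamond a c s u v hac hu hv
    have hrest := ih (hs.step hs₁) ⟨v, ha₁, hw⟩ fun b hb => hind b (List.mem_cons_of_mem _ hb)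
    exact List.forall_mem_cons.2 ⟨hac, hrest⟩

theorem IsOpenMorphism.pairwise_indep_of_exec_s8 (ho : IsOpenMorphism A A' σ η) {w : List E}
    {s t : S} (hs : A.Reachable s) (h : A.Exec s w t) (hw : (w.map η).Pairwise A'.indep) :
    w.Pairwise A.indep := by
  induction w generalizing s with
  | nil => exact List.Pairwise.nil
  | cons a w ih =>
    obtain ⟨u, hu, hrest⟩ := h
    rw [List.map_cons, List.pairwise_cons] at hw
    refine List.Pairwise.cons ?_ (ih (hs.step hu) hrest hw.2)
    exact ho.indep_of_exec_cons hs ⟨u, hu, hrest⟩ fun b hb => hw.1 (η b) (List.mem_map_of_mem hb)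

end Morphism

namespace IsPomOpen

variable {A : AsyncSystem S E} {lab : E → L} {A' : AsyncSystem S' E'} {lab' : E' → L}
  {σ : S → S'} {η : E → E'}

theorem vertexSet_eq (h : IsPomOpen A lab A' lab' σ η) : VertexSet A lab = VertexSet A' lab' := by
  obtain ⟨ho, hlab⟩ := h
  ext l
  constructor
  · rintro ⟨a, s, u, hs, ht, rfl⟩
    exact ⟨η a, σ s, σ u, ho.1.reachable hs, ho.1.2.1 _ _ _ ht, hlab a⟩
  · rintro ⟨a', s', u', hs', ht', rfl⟩
    obtain ⟨s, hs, rfl⟩ := ho.exists_reachable_preimage_s8 hs'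
    obtain ⟨e, u, hu, rfl, -⟩ := ho.2.1 s a' u' ht'
    exact ⟨e, s, u, hs, hu, (hlab e).symm⟩

theorem image_labels_map (h : IsPomOpen A lab A' lab' σ η) (w : List E) :
    lab' '' {b | b ∈ w.map η} = lab '' {a | a ∈ w} := by
  ext l
  simp [h.2]

theorem simplices_eq (h : IsPomOpen A lab A' lab' σ η) : Simplices A lab = Simplices A' lab' := by
  have ho := h.1
  ext X
  simp only [mem_simplices_iff]
  constructor
  · rintro ⟨w, s, hne, hs, hind, ⟨t, ht⟩, rfl⟩
    refine ⟨w.map η, σ s, by simpa using hne, ho.1.reachable hs, ?_, ⟨σ t, ho.1.exec ht⟩,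
      (h.image_labels_map w).symm⟩
    exact List.pairwise_map.2 (hind.imp (ho.1.2.2 _ _))
  · rintro ⟨w', s', hne, hs', hind, ⟨t', ht'⟩, rfl⟩
    obtain ⟨s, hs, rfl⟩ := ho.exists_reachable_preimage_s8 hs'
    obtain ⟨w, t, hw, rfl, -⟩ := ho.exists_exec_lift_s8 ht'
    exact ⟨w, s, by simpa using hne, hs, ho.pairwise_indep_of_exec_s8 hs hw hind, ⟨t, hw⟩,
      h.image_labels_map w⟩

end IsPomOpen

/-- `Pom_L`-bisimilar labelled asynchronous systems have equal associated
simplicial schemes: the vertex sets `λ⁺E` and `λ'⁺E'` coincide, and a subset of `L` is a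
simplex of the scheme of `(A, λ, L)` iff it is a simplex of the scheme of `(A', λ', L)`. -/
theorem bisimilar_schemes_eq {S E S' E' L : Type}
    (A : AsyncSystem S E) (lab : E → L) (A' : AsyncSystem S' E') (lab' : E' → L)
    (h : Bisimilar A lab A' lab') :
    VertexSet A lab = VertexSet A' lab' ∧ Simplices A lab = Simplices A' lab' := by
  obtain ⟨_, _, _, _, _, _, _, _, h₁, h₂⟩ := h
  exact ⟨h₁.vertexSet_eq.symm.trans h₂.vertexSet_eq, h₁.simplices_eq.symm.trans h₂.simplices_eq⟩
end
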